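/- arXiv:math/0206220 — 4 statements merged into one kernel-verified Lean document; each statement's English description precedes it below -/
import Mathlib

section
/- Let B be a type, let C = B →₀ ZMod 2 be the free ZMod 2-module on B, let ∂ : C →ₗ[ZMod 2] C be a linear map, and let V : B → ℝ be a filtration, i.e. for all b, b' ∈ B, if the coefficient of b' in ∂(Finsupp.single b 1) is nonzero then V b > V b'. Let b₀ ∈ B be homologically essential with respect to V, meaning: (1) there exists w ∈ C with w b₀ = 0, with ∂ (Finsupp.single b₀ 1 + w) = 0, and with V b < V b₀ for every b in the support of w; and (2) for every d ∈ C, if the coefficient of b₀ in ∂ d is nonzero, then there exists b ≠ b₀ in the support of ∂ d with V b ≥ V b₀. Then every chain homologous to Finsupp.single b₀ 1 + w contains in its support a basis element b with V b ≥ V b₀; that is, for every d ∈ C, the chain c = Finsupp.single b₀ 1 + w + ∂ d has some b in its support with V b ≥ V b₀. -/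
/-- if `b₀` is homologically essential with respect to the filtration `V`
(conditions (1) and (2)), then every chain homologous to `Finsupp.single b₀ 1 + w`
contains in its support a basis element `b` with `V b ≥ V b₀`. -/
theorem homologically_essential_not_below_level
    {B : Type*} (D : (B →₀ ZMod 2) →ₗ[ZMod 2] (B →₀ ZMod 2)) (V : B → ℝ)
    (hV : ∀ b b' : B, (D (Finsupp.single b 1)) b' ≠ 0 → V b > V b')
    (b₀ : B) (w : B →₀ ZMod 2)
    -- condition (1): `b₀ + w` is a cycle with everything in `w` strictly below level `V b₀`
    (hw₀ : w b₀ = 0)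
    (hcycle : D (Finsupp.single b₀ 1 + w) = 0)
    (hwlt : ∀ b ∈ w.support, V b < V b₀)
    -- condition (2): whenever `b₀` appears in a boundary, the rest of that boundary
    -- contains an element of filtration level at least `V b₀`
    (hess : ∀ d : B →₀ ZMod 2, (D d) b₀ ≠ 0 →
      ∃ b ∈ (D d).support, b ≠ b₀ ∧ V b ≥ V b₀) :
    ∀ d : B →₀ ZMod 2,
      ∃ b ∈ (Finsupp.single b₀ 1 + w + D d).support, V b ≥ V b₀ := by
  intro d
  by_cases h : (D d) b₀ = 0
  · refine ⟨b₀, ?_, le_refl _⟩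
    simp [Finsupp.mem_support_iff, hw₀, h]
  · obtain ⟨b, hb, hbne, hbge⟩ := hess d h
    refine ⟨b, ?_, hbge⟩
    have hwb : w b = 0 := by
      by_contra hwb
      exact absurd hbge (not_le.2 (hwlt b (Finsupp.mem_support_iff.2 hwb)))
    rw [Finsupp.mem_support_iff] at hb ⊢
    simp [Finsupp.single_apply, Ne.symm hbne, hwb, hb]
end

section
/- Let B and B' be types, let C = B →₀ ZMod 2 and C' = B' →₀ ZMod 2 be the free ZMod 2-modules on B and B', let ∂ : C →ₗ[ZMod 2] C and ∂' : C' →ₗ[ZMod 2] C' be linear maps, and let σ : C →ₗ[ZMod 2] C' be a chain map, i.e. σ ∘ ∂ = ∂' ∘ σ. Let V : B → ℝ, b₀ ∈ B, b₀' ∈ B' and t₀ ∈ ℝ. Assume: (i) for every d' ∈ C', the coefficient of b₀' in ∂' d' is zero; (ii) the coefficient of b₀' in σ (Finsupp.single b₀ 1) equals 1; and (iii) for every c ∈ C, if the coefficient of b₀' in σ c is nonzero then there exists b in the support of c with V b ≥ t₀. Then for all a, z ∈ C with ∂ a = Finsupp.single b₀ 1 + z and z b₀ = 0, there exists b in the support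 of z with V b ≥ t₀. (If b₀ is killed by the boundary, the rest of that boundary must contain a generator of filtration level at least t₀.) -/
/-- if `σ` is a chain map between free `ZMod 2` complexes, `b₀'` never
appears in a boundary of the target complex, `b₀'` appears with coefficient `1` in
`σ (Finsupp.single b₀ 1)`, and `σ` lifts the appearance of `b₀'` to a support element
of filtration level at least `t₀`, then whenever `∂ a = Finsupp.single b₀ 1 + z` with
`z b₀ = 0`, the chain `z` contains a generator of filtration level at least `t₀`. -/
theorem killed_by_boundary_high_filtration
    {B B' : Type*}
    (D : (B →₀ ZMod 2) →ₗ[ZMod 2] (B →₀ ZMod 2))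
    (D' : (B' →₀ ZMod 2) →ₗ[ZMod 2] (B' →₀ ZMod 2))
    (σ : (B →₀ ZMod 2) →ₗ[ZMod 2] (B' →₀ ZMod 2))
    (hchain : ∀ c : B →₀ ZMod 2, σ (D c) = D' (σ c))
    (V : B → ℝ) (b₀ : B) (b₀' : B') (t₀ : ℝ)
    (h₁ : ∀ d' : B' →₀ ZMod 2, (D' d') b₀' = 0)
    (h₂ : (σ (Finsupp.single b₀ 1)) b₀' = 1)
    (h₃ : ∀ c : B →₀ ZMod 2, (σ c) b₀' ≠ 0 → ∃ b ∈ c.support, V b ≥ t₀) :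
    ∀ a z : B →₀ ZMod 2, D a = Finsupp.single b₀ 1 + z → z b₀ = 0 →
      ∃ b ∈ z.support, V b ≥ t₀ := by
  intro a z ha _
  apply h₃
  have h0 : (σ (D a)) b₀' = 0 := by rw [hchain]; exact h₁ _
  rw [ha, map_add, Finsupp.add_apply, h₂] at h0
  intro hz
  rw [hz, add_zero] at h0
  exact one_ne_zero h0
end

section
/- Let V be a real vector space and ω : V →ₗ[ℝ] V →ₗ[ℝ] ℝ an alternating bilinear form (ω v v = 0 for all v). Let K be the radical of ω, i.e. the subspace of all v ∈ V with ω v w = 0 for all w ∈ V, and let p : V →ₗ[ℝ] K be a linear projection onto K (so p k = k for every k ∈ K). Define the bilinear form Ω on V × Module.Dual ℝ K by Ω (v₁, α₁) (v₂, α₂) = ω v₁ v₂ + α₁ (p v₂) − α₂ (p v₁). Then Ω is alternating, Ω (v₁, 0) (v₂, 0) = ω v₁ v₂ for all v₁, v₂ ∈ V, and Ω is nondegenerate: if Ω x y = 0 for all y ∈ V × Module.Dual ℝ K, then x = 0. -/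
/-- given an alternating bilinear form `ω` on a real vector space `V`
with radical `K = ker ω`, and a linear projection `p : V → K` onto `K`, the form
`Ω ((v₁, α₁), (v₂, α₂)) = ω v₁ v₂ + α₁ (p v₂) - α₂ (p v₁)` on `V × K*` is alternating,
restricts to `ω` on `V × {0}`, and is nondegenerate. -/
theorem coisotropic_linear_symplectic_extension
    {V : Type*} [AddCommGroup V] [Module ℝ V]
    (ω : V →ₗ[ℝ] V →ₗ[ℝ] ℝ) (halt : ∀ v : V, ω v v = 0)
    (p : V →ₗ[ℝ] ↥(LinearMap.ker ω))
    (hp : ∀ k : ↥(LinearMap.ker ω), p (k : V) = k)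
    (Ω : V × Module.Dual ℝ ↥(LinearMap.ker ω) →
         V × Module.Dual ℝ ↥(LinearMap.ker ω) → ℝ)
    (hΩ : ∀ (v₁ v₂ : V) (α₁ α₂ : Module.Dual ℝ ↥(LinearMap.ker ω)),
      Ω (v₁, α₁) (v₂, α₂) = ω v₁ v₂ + α₁ (p v₂) - α₂ (p v₁)) :
    (∀ x, Ω x x = 0) ∧
    (∀ v₁ v₂ : V, Ω (v₁, 0) (v₂, 0) = ω v₁ v₂) ∧
    (∀ x, (∀ y, Ω x y = 0) → x = 0) := by
  have hskew : ∀ v w : V, ω v w = -ω w v := by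
    intro v w
    have h := halt (v + w)
    simp only [map_add, LinearMap.add_apply, halt] at h
    linarith
  refine ⟨?_, ?_, ?_⟩
  · rintro ⟨v, α⟩
    rw [hΩ, halt]; ring
  · intro v₁ v₂
    rw [hΩ]; simp
  · rintro ⟨v, α⟩ h
    have hpv : p v = 0 := by
      have : ∀ β : Module.Dual ℝ ↥(LinearMap.ker ω), β (p v) = 0 := by
        intro β
        have := h (0, β)
        rw [hΩ] at this
        simpa using this
      exact (Module.forall_dual_apply_eq_zero_iff ℝ (p v)).mp this
    have hα : α = 0 := by
      ext k
      have := h ((k : V), 0)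
      rw [hΩ] at this
      have hk : ω v (k : V) = 0 := by
        rw [hskew]
        have : ω (k : V) = 0 := k.2
        rw [this]; simp
      rw [hk, hp, hpv] at this
      simpa using this
    have hv : v = 0 := by
      have hker : v ∈ LinearMap.ker ω := by
        rw [LinearMap.mem_ker]
        ext w
        have := h (w, 0)
        rw [hΩ, hα] at this
        simpa using this
      have := hp ⟨v, hker⟩
      rw [hpv] at this
      exact congrArg Subtype.val this.symm
    rw [hv, hα]; rfl
end

section
/- Let V and B be real vector spaces and π : V →ₗ[ℝ] B a surjective linear map. Let σ : B →ₗ[ℝ] B →ₗ[ℝ] ℝ be an alternating nondegenerate bilinear form and τ : V →ₗ[ℝ] V →ₗ[ℝ] ℝ an alternating bilinear form whose radical R = {v ∈ V | ∀ w, τ v w = 0} is a complement of ker π in V (i.e. R and ker π are complementary subspaces: R ⊓ ker π = ⊥ and R ⊔ ker π = ⊤). Then the bilinear form Ω defined by Ω v w = τ v w + σ (π v) (π w) is alternating and nondegenerate: if Ω v w = 0 for all w ∈ V, then v = 0. -/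
/-- if `π : V → B` is a surjective linear map, `σ` an alternating
nondegenerate bilinear form on `B`, and `τ` an alternating bilinear form on `V` whose
radical is a complement of `ker π`, then `Ω v w = τ v w + σ (π v) (π w)` is alternating
and nondegenerate. -/
theorem fibration_symplectic_form_nondegenerate
    {V B : Type*} [AddCommGroup V] [Module ℝ V] [AddCommGroup B] [Module ℝ B]
    (π : V →ₗ[ℝ] B) (hπ : Function.Surjective π)
    (σ : B →ₗ[ℝ] B →ₗ[ℝ] ℝ)
    (hσalt : ∀ b : B, σ b b = 0)
    (hσnd : ∀ b : B, (∀ b' : B, σ b b' = 0) → b = 0)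
    (τ : V →ₗ[ℝ] V →ₗ[ℝ] ℝ)
    (hτalt : ∀ v : V, τ v v = 0)
    (hcompl₁ : LinearMap.ker τ ⊓ LinearMap.ker π = ⊥)
    (hcompl₂ : LinearMap.ker τ ⊔ LinearMap.ker π = ⊤)
    (Ω : V → V → ℝ)
    (hΩ : ∀ v w : V, Ω v w = τ v w + σ (π v) (π w)) :
    (∀ v : V, Ω v v = 0) ∧ (∀ v : V, (∀ w : V, Ω v w = 0) → v = 0) := by
  have hskew : ∀ v w : V, τ w v = -τ v w := by
    intro v w
    have h := hτalt (v + w)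
    simp only [map_add, LinearMap.add_apply, hτalt] at h
    linarith
  refine ⟨fun v => by rw [hΩ, hτalt, hσalt, add_zero], fun v hv => ?_⟩
  -- decompose v = r + k with r ∈ ker τ, k ∈ ker π
  have hv' : v ∈ LinearMap.ker τ ⊔ LinearMap.ker π := by rw [hcompl₂]; trivial
  obtain ⟨r, hr, k, hk, hrk⟩ := Submodule.mem_sup.mp hv'
  have hrτ : τ r = 0 := hr
  have hkπ : π k = 0 := hk
  -- τ v w = τ k w for all w
  have hτv : ∀ w : V, τ v w = τ k w := by
    intro w
    rw [← hrk, map_add, LinearMap.add_apply, hrτ]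
    simp
  -- k = 0
  have hk0 : k = 0 := by
    have hkmem : k ∈ LinearMap.ker τ ⊓ LinearMap.ker π := by
      refine ⟨?_, hk⟩
      -- show τ k = 0
      have hτk : ∀ w : V, τ k w = 0 := by
        intro w
        have hw' : w ∈ LinearMap.ker τ ⊔ LinearMap.ker π := by rw [hcompl₂]; trivial
        obtain ⟨r', hr', k', hk', hrk'⟩ := Submodule.mem_sup.mp hw'
        have h1 : τ k r' = 0 := by
          rw [hskew r' k, show τ r' = 0 from hr']
          simp
        have h2 : τ k k' = 0 := by
          have := hv k'
          rw [hΩ, hτv, show π k' = 0 from hk', map_zero] at this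
          simpa using this
        rw [← hrk', map_add, h1, h2, add_zero]
      exact LinearMap.ext fun w => hτk w
    rw [hcompl₁] at hkmem
    simpa using hkmem
  -- now v = r ∈ ker τ, so Ω v w = σ (π v) (π w)
  have hvr : v = r := by rw [← hrk, hk0, add_zero]
  have hσv : ∀ b' : B, σ (π v) b' = 0 := by
    intro b'
    obtain ⟨w, rfl⟩ := hπ b'
    have := hv w
    rw [hΩ] at this
    rw [show τ v = 0 by rw [hvr]; exact hrτ] at this
    simpa using this
  have hπv : π v = 0 := hσnd _ hσv
  have : v ∈ LinearMap.ker τ ⊓ LinearMap.ker π := ⟨by rw [hvr]; exact hr, hπv⟩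
  rw [hcompl₁] at this
  simpa using this
end
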